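/- arXiv:2605.01621 — 7 statements merged into one kernel-verified Lean document; each statement's English description precedes it below -/
import Mathlib

section
/- Let X ⊆ ℝⁿ, let F, f : ℝⁿ × ℝᵐ → ℝ, let Y : ℝⁿ → Set ℝᵐ, and for x ∈ X let S(x) := {y ∈ Y(x) : ∀ z ∈ Y(x), f(x,y) ≤ f(x,z)}. Assume that for every x ∈ X the set {F(x,y) : y ∈ S(x)} is nonempty and bounded below, and define φₒ(x) := inf{F(x,y) : y ∈ S(x)}. Suppose x̄ ∈ X is a local optimal solution of the original optimistic problem (Pₒ), i.e., there is an open neighborhood U of x̄ such that φₒ(x̄) ≤ φₒ(x) for all x ∈ X ∩ U. Then for every ȳ ∈ S(x̄) with F(x̄,ȳ) = φₒ(x̄), the point (x̄,ȳ) is a local optimal solution of the standard optimistic bilevel problem (P): there is an open neighborhood V of (x̄,ȳ) such that F(x̄,ȳ) ≤ F(x,y) for all (x,y) ∈ V with x ∈ X and y ∈ S(x). -/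
/-- A local optimal solution x̄ of the original optimistic bilevel problem (Pₒ),
together with any ȳ ∈ S(x̄) attaining φₒ(x̄), yields a local optimal solution
(x̄,ȳ) of the standard optimistic bilevel problem (P). -/
theorem stmt_1 {n m : ℕ} (X : Set (Fin n → ℝ))
    (F f : (Fin n → ℝ) → (Fin m → ℝ) → ℝ)
    (Y : (Fin n → ℝ) → Set (Fin m → ℝ))
    (S : (Fin n → ℝ) → Set (Fin m → ℝ))
    (hS : ∀ x, S x = {y ∈ Y x | ∀ z ∈ Y x, f x y ≤ f x z})
    (hne : ∀ x ∈ X, ((fun y => F x y) '' S x).Nonempty)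
    (hbdd : ∀ x ∈ X, BddBelow ((fun y => F x y) '' S x))
    (φo : (Fin n → ℝ) → ℝ)
    (hφo : ∀ x, φo x = sInf ((fun y => F x y) '' S x))
    (xb : Fin n → ℝ) (hxb : xb ∈ X)
    (hloc : ∃ U : Set (Fin n → ℝ), IsOpen U ∧ xb ∈ U ∧ ∀ x ∈ X ∩ U, φo xb ≤ φo x) :
    ∀ yb ∈ S xb, F xb yb = φo xb →
      ∃ V : Set ((Fin n → ℝ) × (Fin m → ℝ)), IsOpen V ∧ (xb, yb) ∈ V ∧
        ∀ p : (Fin n → ℝ) × (Fin m → ℝ),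
          p ∈ V → p.1 ∈ X → p.2 ∈ S p.1 → F xb yb ≤ F p.1 p.2 := by
  obtain ⟨U, hU, hxbU, hopt⟩ := hloc
  intro yb hyb hFyb
  refine ⟨U ×ˢ Set.univ, hU.prod isOpen_univ, ⟨hxbU, Set.mem_univ _⟩, ?_⟩
  rintro ⟨x, y⟩ ⟨hxU, -⟩ hxX hyS
  calc F xb yb = φo xb := hFyb
    _ ≤ φo x := hopt x ⟨hxX, hxU⟩
    _ ≤ F x y := by
        rw [hφo]
        exact csInf_le (hbdd x hxX) ⟨y, hyS, rfl⟩
end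

section
/- Let f : ℝⁿ × ℝᵐ → ℝ be such that the map (x,y) ↦ ∇_y f(x,y) is differentiable, let F : ℝⁿ × ℝᵐ → ℝ be differentiable, let y : ℝⁿ → ℝᵐ be differentiable at x̄ with ∇_y f(x, y(x)) = 0 for all x in a neighborhood of x̄, and suppose the Fréchet derivative H_{yy} at y(x̄) of y ↦ ∇_y f(x̄,y) is invertible; let H_{xy} be the Fréchet derivative at x̄ of x ↦ ∇_y f(x, y(x̄)). Then the reduced objective 𝓕(x) := F(x, y(x)) is differentiable at x̄ and its gradient (the hypergradient) is ∇𝓕(x̄) = ∇_x F(x̄, y(x̄)) − H_{xy}* (H_{yy}⁻¹ ∇_y F(x̄, y(x̄))), where H_{xy}* denotes the adjoint of H_{xy}. -/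
/-!
Differentiating the stationarity identity `G x (y x) = 0` at `x̄` gives `Hxy + Hyy ∘ y' = 0`, so
`y' = -Hyy⁻¹ ∘ Hxy`, and the chain rule gives `∇𝓕 = ∇ₓF + y'* ∇_y F`. It remains to see that
`Hyy` is self-adjoint although `f x̄` is not assumed differentiable: as `Hyy` is invertible,
`G x̄` has no zero in a punctured neighbourhood of `y x̄`, and `gradient` is `0` wherever `f x̄` is
not differentiable, so `f x̄` is differentiable there. Symmetry of second derivatives on a ball
whose boundary passes through `y x̄` then shows that `Hyy` is symmetric.
-/

open Filter Topology InnerProductSpace ContinuousLinearMap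

section Partials

variable {𝕜 : Type*} [NontriviallyNormedField 𝕜]
  {E F K : Type*} [NormedAddCommGroup E] [NormedSpace 𝕜 E] [NormedAddCommGroup F]
  [NormedSpace 𝕜 F] [NormedAddCommGroup K] [NormedSpace 𝕜 K]

theorem hasFDerivAt_comp_of_partials {g : E → F → K} {u : E → F} {u' : E →L[𝕜] F}
    {gx : E →L[𝕜] K} {gy : F →L[𝕜] K} {a : E}
    (hg : DifferentiableAt 𝕜 (fun p : E × F => g p.1 p.2) (a, u a)) (hu : HasFDerivAt u u' a)
    (hgx : HasFDerivAt (fun x => g x (u a)) gx a) (hgy : HasFDerivAt (g a) gy (u a)) :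
    HasFDerivAt (fun x => g x (u x)) (gx + gy ∘L u') a := by
  set D := fderiv 𝕜 (fun p : E × F => g p.1 p.2) (a, u a)
  have hD : HasFDerivAt (fun p : E × F => g p.1 p.2) D (a, u a) := hg.hasFDerivAt
  have hDx : D ∘L inl 𝕜 E F = gx :=
    (hD.comp (f := fun x => (x, u a)) a (hasFDerivAt_prodMk_left a (u a))).unique hgx
  have hDy : D ∘L inr 𝕜 E F = gy := (hD.comp (u a) (hasFDerivAt_prodMk_right a (u a))).unique hgy
  refine (hD.comp a ((hasFDerivAt_id a).prodMk hu)).congr_fderiv ?_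
  ext v
  simpa [← hDx, ← hDy] using (D.comp_inl_add_comp_inr (v, u' v)).symm

theorem fderiv_eq_neg_symm_comp_of_eventually_eq_zero {G : E → F → K} {y : E → F}
    {y' : E →L[𝕜] F} {a : E} {Hxy : E →L[𝕜] K} {Hyy : F ≃L[𝕜] K}
    (hG : DifferentiableAt 𝕜 (fun p : E × F => G p.1 p.2) (a, y a)) (hy : HasFDerivAt y y' a)
    (hstat : ∀ᶠ x in 𝓝 a, G x (y x) = 0) (hHxy : HasFDerivAt (fun x => G x (y a)) Hxy a)
    (hHyy : HasFDerivAt (G a) (Hyy : F →L[𝕜] K) (y a)) :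
    y' = -((Hyy.symm : K →L[𝕜] F) ∘L Hxy) := by
  have hzero : Hxy + (Hyy : F →L[𝕜] K) ∘L y' = 0 :=
    (hasFDerivAt_comp_of_partials hG hy hHxy hHyy).unique
      ((hasFDerivAt_const 0 a).congr_of_eventuallyEq hstat)
  ext1 v
  have hv : Hyy (y' v) = -Hxy v := eq_neg_of_add_eq_zero_right (by simpa using congr($hzero v))
  simpa using congr(Hyy.symm $hv)

end Partials

theorem second_derivative_symmetric_of_eventually_nhdsNE {E F : Type*} [NormedAddCommGroup E]
    [NormedSpace ℝ E] [NormedAddCommGroup F] [NormedSpace ℝ F] {f : E → F}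
    {f' : E → E →L[ℝ] F} {f'' : E →L[ℝ] E →L[ℝ] F} {x : E}
    (hf : ∀ᶠ y in 𝓝[≠] x, HasFDerivAt f (f' y) y) (hx : HasFDerivAt f' f'' x) (v w : E) :
    f'' v w = f'' w v := by
  rcases subsingleton_or_nontrivial E with hE | hE
  · rw [Subsingleton.elim v w]
  obtain ⟨r, hr, hball⟩ := Metric.mem_nhdsWithin_iff.1 hf
  obtain ⟨z, hz⟩ := exists_norm_eq E (half_pos hr).le
  have hx_mem : x ∈ Metric.closedBall (x + z) (r / 2) := by
    rw [Metric.mem_closedBall, dist_self_add_right, hz]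
  have hsub : Metric.ball (x + z) (r / 2) ⊆ Metric.ball x r ∩ {x}ᶜ := by
    intro y hy
    refine ⟨?_, fun hyx => ?_⟩
    · calc dist y x ≤ dist y (x + z) + dist (x + z) x := dist_triangle _ _ _
        _ < r / 2 + r / 2 :=
          add_lt_add_of_lt_of_le hy (by rw [dist_comm, dist_self_add_right, hz])
        _ = r := add_halves r
    · subst hyx; simp [hz] at hy
  have hint : interior (Metric.closedBall (x + z) (r / 2)) = Metric.ball (x + z) (r / 2) :=
    interior_closedBall _ (half_pos hr).ne'
  -- the closed ball touches `x` while its interior avoids it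
  refine (convex_closedBall (x + z) (r / 2)).second_derivative_within_at_symmetric
    (by simp [hint, hr]) (fun y hy => hball (hsub (hint ▸ hy))) hx_mem
    hx.hasFDerivWithinAt v w

theorem ContinuousLinearEquiv.isSymmetric_symm {𝕜 E : Type*} [RCLike 𝕜] [NormedAddCommGroup E]
    [InnerProductSpace 𝕜 E] {H : E ≃L[𝕜] E} (hH : ((H : E →L[𝕜] E) : E →ₗ[𝕜] E).IsSymmetric) :
    ((H.symm : E →L[𝕜] E) : E →ₗ[𝕜] E).IsSymmetric := fun u v => by
  simpa using (hH (H.symm u) (H.symm v)).symm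

section Gradient

variable {E : Type*} [NormedAddCommGroup E] [InnerProductSpace ℝ E] [CompleteSpace E]

theorem differentiableAt_of_gradient_ne_zero {f : E → ℝ} {x : E} (h : gradient f x ≠ 0) :
    DifferentiableAt ℝ f x := by
  by_contra hf
  exact h (gradient_eq_zero_of_not_differentiableAt hf)

theorem isSymmetric_of_hasFDerivAt_gradient {f : E → ℝ} {x : E} {H : E ≃L[ℝ] E}
    (hH : HasFDerivAt (gradient f) (H : E →L[ℝ] E) x) (hx : gradient f x = 0) :
    ((H : E →L[ℝ] E) : E →ₗ[ℝ] E).IsSymmetric := by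
  have hne : ∀ᶠ z in 𝓝[≠] x, gradient f z ≠ 0 :=
    hx ▸ hH.eventually_ne ⟨_, H.antilipschitz⟩
  have hf : ∀ᶠ z in 𝓝[≠] x, HasFDerivAt f (toDual ℝ E (gradient f z)) z :=
    hne.mono fun z hz => (differentiableAt_of_gradient_ne_zero hz).hasGradientAt.hasFDerivAt
  have hf' := (innerSL ℝ : E →L[ℝ] E →L[ℝ] ℝ).hasFDerivAt.comp x hH
  intro v w
  exact (second_derivative_symmetric_of_eventually_nhdsNE hf hf' v w).trans
    (real_inner_comm _ _).symm

variable {F : Type*} [NormedAddCommGroup F] [InnerProductSpace ℝ F] [CompleteSpace F]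

theorem hasGradientAt_comp_of_partials {g : E → F → ℝ} {u : E → F} {u' : E →L[ℝ] F} {a : E}
    (hg : DifferentiableAt ℝ (fun p : E × F => g p.1 p.2) (a, u a)) (hu : HasFDerivAt u u' a) :
    HasGradientAt (fun x => g x (u x))
      (gradient (fun x => g x (u a)) a + adjoint u' (gradient (g a) (u a))) a := by
  have hgx : DifferentiableAt ℝ (fun x => g x (u a)) a := by fun_prop
  have hgy : DifferentiableAt ℝ (g a) (u a) := by fun_prop
  refine (hasFDerivAt_comp_of_partials hg hu hgx.hasGradientAt.hasFDerivAt
    hgy.hasGradientAt.hasFDerivAt).congr_fderiv ?_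
  ext w
  simp [adjoint_inner_left]

end Gradient

/-- Hypergradient formula for the implicit-function reformulation of a bilevel
problem with unconstrained lower level:
∇𝓕(x̄) = ∇_x F(x̄,y(x̄)) − H_{xy}* (H_{yy}⁻¹ ∇_y F(x̄,y(x̄))). -/
theorem stmt_4 {n m : ℕ}
    (f : EuclideanSpace ℝ (Fin n) → EuclideanSpace ℝ (Fin m) → ℝ)
    (F : EuclideanSpace ℝ (Fin n) → EuclideanSpace ℝ (Fin m) → ℝ)
    (hF : Differentiable ℝ
      (fun p : EuclideanSpace ℝ (Fin n) × EuclideanSpace ℝ (Fin m) => F p.1 p.2))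
    (G : EuclideanSpace ℝ (Fin n) → EuclideanSpace ℝ (Fin m) → EuclideanSpace ℝ (Fin m))
    (hG : ∀ x y, G x y = gradient (fun y' => f x y') y)
    (hGdiff : Differentiable ℝ
      (fun p : EuclideanSpace ℝ (Fin n) × EuclideanSpace ℝ (Fin m) => G p.1 p.2))
    (y : EuclideanSpace ℝ (Fin n) → EuclideanSpace ℝ (Fin m))
    (xb : EuclideanSpace ℝ (Fin n))
    (hy : DifferentiableAt ℝ y xb)
    (hstat : ∀ᶠ x in nhds xb, G x (y x) = 0)
    (Hyy : EuclideanSpace ℝ (Fin m) ≃L[ℝ] EuclideanSpace ℝ (Fin m))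
    (hHyy : HasFDerivAt (fun y' => G xb y')
      (Hyy : EuclideanSpace ℝ (Fin m) →L[ℝ] EuclideanSpace ℝ (Fin m)) (y xb))
    (Hxy : EuclideanSpace ℝ (Fin n) →L[ℝ] EuclideanSpace ℝ (Fin m))
    (hHxy : HasFDerivAt (fun x => G x (y xb)) Hxy xb) :
    DifferentiableAt ℝ (fun x => F x (y x)) xb ∧
      gradient (fun x => F x (y x)) xb =
        gradient (fun x => F x (y xb)) xb -
          (ContinuousLinearMap.adjoint Hxy)
            (Hyy.symm (gradient (fun y' => F xb y') (y xb))) := by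
  have hDy : fderiv ℝ y xb = -((Hyy.symm : _ →L[ℝ] _) ∘L Hxy) :=
    fderiv_eq_neg_symm_comp_of_eventually_eq_zero (hGdiff _) hy.hasFDerivAt hstat hHxy hHyy
  have hGf : G xb = gradient (f xb) := funext (hG xb)
  have hHyy_symm : IsSelfAdjoint (Hyy.symm : EuclideanSpace ℝ (Fin m) →L[ℝ] _) :=
    isSelfAdjoint_iff_isSymmetric.2 <| ContinuousLinearEquiv.isSymmetric_symm <|
      isSymmetric_of_hasFDerivAt_gradient (hGf ▸ hHyy) (hGf ▸ hstat.self_of_nhds)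
  have h := hasGradientAt_comp_of_partials (hF _) hy.hasFDerivAt
  refine ⟨h.differentiableAt, h.gradient.trans ?_⟩
  simp [hDy, adjoint_comp, hHyy_symm.adjoint_eq, sub_eq_add_neg]
end

section
/- Let f : ℝⁿ × ℝᵐ → ℝ and g_i : ℝⁿ × ℝᵐ → ℝ (i ∈ I, I a finite index set) be differentiable, let U₀ ⊆ ℝⁿ be an open neighborhood of x̄, and let y : U₀ → ℝᵐ be differentiable at x̄. Suppose (i) g_i(x, y(x)) = 0 for all x ∈ U₀ and all i ∈ I (active constraints remain active), and (ii) there exist real numbers u_i ≥ 0 (i ∈ I) with ∇_y f(x̄, y(x̄)) + Σ_{i ∈ I} u_i ∇_y g_i(x̄, y(x̄)) = 0 (lower-level stationarity). Then the function φ(x) := f(x, y(x)) is differentiable at x̄ and ∇φ(x̄) = ∇_x f(x̄, y(x̄)) + Σ_{i ∈ I} u_i ∇_x g_i(x̄, y(x̄)). -/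
/-!
Envelope theorem. Near `x̄` the constraints vanish along the graph of `y`, so
`φ(x) = ℓ(x, y(x))` for the Lagrangian `ℓ = f + ∑ uᵢ gᵢ`. Lower-level stationarity says that the
partial derivative of `ℓ` in `y` vanishes at `(x̄, y(x̄))`, so the chain rule along the graph
leaves only `∂ₓℓ(x̄, y(x̄))`: the derivative of `y` never enters.
-/

open ContinuousLinearMap InnerProductSpace Filter Topology
open scoped Gradient

section Lagrangian

variable {𝕜 : Type*} [NontriviallyNormedField 𝕜]
  {E F G : Type*} [NormedAddCommGroup E] [NormedSpace 𝕜 E] [NormedAddCommGroup F]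
  [NormedSpace 𝕜 F] [NormedAddCommGroup G] [NormedSpace 𝕜 G]

theorem HasFDerivAt.comp_graph_of_comp_inr_eq_zero {Φ : E × F → G} {L : E × F →L[𝕜] G}
    {y : E → F} {a : E} (hΦ : HasFDerivAt Φ L (a, y a)) (hy : DifferentiableAt 𝕜 y a)
    (hL : L ∘L inr 𝕜 E F = 0) :
    HasFDerivAt (fun x => Φ (x, y x)) (L ∘L inl 𝕜 E F) a := by
  refine (hΦ.comp a ((hasFDerivAt_id a).prodMk hy.hasFDerivAt)).congr_fderiv ?_
  ext v
  have hsplit : (v, fderiv 𝕜 y a v) = inl 𝕜 E F v + inr 𝕜 E F (fderiv 𝕜 y a v) := by simp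
  have hinr : L (inr 𝕜 E F (fderiv 𝕜 y a v)) = 0 := congr($hL (fderiv 𝕜 y a v))
  change L (v, fderiv 𝕜 y a v) = L (inl 𝕜 E F v)
  rw [hsplit, map_add, hinr, add_zero]

variable {ι : Type*} [Fintype ι] {P : Type*}

def lagrangian (f : P → G) (g : ι → P → G) (u : ι → 𝕜) (p : P) : G :=
  f p + ∑ i, u i • g i p

theorem HasFDerivAt.lagrangian [NormedAddCommGroup P] [NormedSpace 𝕜 P] {f : P → G}
    {g : ι → P → G} {A : P →L[𝕜] G} {B : ι → P →L[𝕜] G} {p : P}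
    (hf : HasFDerivAt f A p) (hg : ∀ i, HasFDerivAt (g i) (B i) p)
    (u : ι → 𝕜) :
    HasFDerivAt (lagrangian f g u) (A + ∑ i, u i • B i) p :=
  hf.add (HasFDerivAt.fun_sum fun i _ => (hg i).const_smul (u i))

theorem lagrangian_eq_of_forall_eq_zero {f : P → G} {g : ι → P → G} {p : P}
    (hg : ∀ i, g i p = 0) (u : ι → 𝕜) :
    lagrangian f g u p = f p := by
  simp [lagrangian, hg]

theorem add_sum_smul_comp {D H : Type*} [NormedAddCommGroup D] [NormedSpace 𝕜 D]
    [NormedAddCommGroup H] [NormedSpace 𝕜 H]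
    (A : D →L[𝕜] G) (B : ι → D →L[𝕜] G) (u : ι → 𝕜) (J : H →L[𝕜] D) :
    (A + ∑ i, u i • B i) ∘L J = A ∘L J + ∑ i, u i • B i ∘L J := by
  ext v
  simp

theorem HasFDerivAt.comp_graph_of_lagrangian_stationary {f : E × F → G} {g : ι → E × F → G}
    {A : E × F →L[𝕜] G} {B : ι → E × F →L[𝕜] G} {y : E → F} {a : E} (u : ι → 𝕜)
    (hf : HasFDerivAt f A (a, y a)) (hg : ∀ i, HasFDerivAt (g i) (B i) (a, y a))
    (hy : DifferentiableAt 𝕜 y a) (hactive : ∀ᶠ x in 𝓝 a, ∀ i, g i (x, y x) = 0)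
    (hstat : A ∘L inr 𝕜 E F + ∑ i, u i • B i ∘L inr 𝕜 E F = 0) :
    HasFDerivAt (fun x => f (x, y x)) (A ∘L inl 𝕜 E F + ∑ i, u i • B i ∘L inl 𝕜 E F) a := by
  rw [← add_sum_smul_comp] at hstat ⊢
  exact ((hf.lagrangian hg u).comp_graph_of_comp_inr_eq_zero hy hstat).congr_of_eventuallyEq
    (hactive.mono fun _ hx => (lagrangian_eq_of_forall_eq_zero hx u).symm)

end Lagrangian

section Gradient

variable {E F : Type*} [NormedAddCommGroup E] [InnerProductSpace ℝ E]
  [NormedAddCommGroup F] [InnerProductSpace ℝ F]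

theorem HasFDerivAt.gradient_comp_prodMk_left [CompleteSpace E] {Φ : E × F → ℝ}
    {L : E × F →L[ℝ] ℝ} {a : E} {b : F} (hΦ : HasFDerivAt Φ L (a, b)) :
    ∇ (fun x => Φ (x, b)) a = (toDual ℝ E).symm (L ∘L inl ℝ E F) :=
  (hΦ.comp a (hasFDerivAt_prodMk_left a b)).hasGradientAt.gradient

theorem HasFDerivAt.gradient_comp_prodMk_right [CompleteSpace F] {Φ : E × F → ℝ}
    {L : E × F →L[ℝ] ℝ} {a : E} {b : F} (hΦ : HasFDerivAt Φ L (a, b)) :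
    ∇ (fun y => Φ (a, y)) b = (toDual ℝ F).symm (L ∘L inr ℝ E F) :=
  (hΦ.comp b (hasFDerivAt_prodMk_right a b)).hasGradientAt.gradient

end Gradient

theorem stmt_10_general {n m : ℕ} {ι : Type*} [Fintype ι]
    (f : EuclideanSpace ℝ (Fin n) → EuclideanSpace ℝ (Fin m) → ℝ)
    (g : ι → EuclideanSpace ℝ (Fin n) → EuclideanSpace ℝ (Fin m) → ℝ)
    (hf : Differentiable ℝ
      (fun p : EuclideanSpace ℝ (Fin n) × EuclideanSpace ℝ (Fin m) => f p.1 p.2))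
    (hg : ∀ i, Differentiable ℝ
      (fun p : EuclideanSpace ℝ (Fin n) × EuclideanSpace ℝ (Fin m) => g i p.1 p.2))
    (U₀ : Set (EuclideanSpace ℝ (Fin n))) (hU₀ : IsOpen U₀)
    (xb : EuclideanSpace ℝ (Fin n)) (hxb : xb ∈ U₀)
    (y : EuclideanSpace ℝ (Fin n) → EuclideanSpace ℝ (Fin m))
    (hy : DifferentiableAt ℝ y xb)
    (hactive : ∀ x ∈ U₀, ∀ i, g i x (y x) = 0)
    (u : ι → ℝ)
    (hstat : gradient (fun y' => f xb y') (y xb) +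
      ∑ i, u i • gradient (fun y' => g i xb y') (y xb) = 0) :
    DifferentiableAt ℝ (fun x => f x (y x)) xb ∧
      gradient (fun x => f x (y x)) xb =
        gradient (fun x => f x (y xb)) xb +
          ∑ i, u i • gradient (fun x => g i x (y xb)) xb := by
  have hA := (hf (xb, y xb)).hasFDerivAt
  have hB := fun i => (hg i (xb, y xb)).hasFDerivAt
  simp only [hA.gradient_comp_prodMk_right, (hB _).gradient_comp_prodMk_right] at hstat
  replace hstat := congrArg (toDual ℝ _) hstat
  simp only [map_add, map_sum, map_smul, LinearIsometryEquiv.apply_symm_apply, map_zero] at hstat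
  have hφ := hA.comp_graph_of_lagrangian_stationary (g := fun i p => g i p.1 p.2) u hB hy
    (eventually_of_mem (hU₀.mem_nhds hxb) fun x hx => hactive x hx) hstat
  refine ⟨hφ.differentiableAt, ?_⟩
  rw [hφ.hasGradientAt.gradient, hA.gradient_comp_prodMk_left]
  simp only [(hB _).gradient_comp_prodMk_left, map_add, map_sum, map_smul]

/-- Gradient of the value function of the constrained lower-level problem along
the optimal solution function: under active-constraint invariance and
lower-level stationarity with multipliers u_i ≥ 0, the function
φ(x) := f(x,y(x)) is differentiable at x̄ with
∇φ(x̄) = ∇_x f(x̄,y(x̄)) + Σᵢ uᵢ ∇_x gᵢ(x̄,y(x̄)). -/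
theorem stmt_10 {n m : ℕ} {ι : Type*} [Fintype ι]
    (f : EuclideanSpace ℝ (Fin n) → EuclideanSpace ℝ (Fin m) → ℝ)
    (g : ι → EuclideanSpace ℝ (Fin n) → EuclideanSpace ℝ (Fin m) → ℝ)
    (hf : Differentiable ℝ
      (fun p : EuclideanSpace ℝ (Fin n) × EuclideanSpace ℝ (Fin m) => f p.1 p.2))
    (hg : ∀ i, Differentiable ℝ
      (fun p : EuclideanSpace ℝ (Fin n) × EuclideanSpace ℝ (Fin m) => g i p.1 p.2))
    (U₀ : Set (EuclideanSpace ℝ (Fin n))) (hU₀ : IsOpen U₀)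
    (xb : EuclideanSpace ℝ (Fin n)) (hxb : xb ∈ U₀)
    (y : EuclideanSpace ℝ (Fin n) → EuclideanSpace ℝ (Fin m))
    (hy : DifferentiableAt ℝ y xb)
    (hactive : ∀ x ∈ U₀, ∀ i, g i x (y x) = 0)
    (u : ι → ℝ) (hu : ∀ i, 0 ≤ u i)
    (hstat : gradient (fun y' => f xb y') (y xb) +
      ∑ i, u i • gradient (fun y' => g i xb y') (y xb) = 0) :
    DifferentiableAt ℝ (fun x => f x (y x)) xb ∧
      gradient (fun x => f x (y x)) xb =
        gradient (fun x => f x (y xb)) xb +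
          ∑ i, u i • gradient (fun x => g i x (y xb)) xb :=
  stmt_10_general f g hf hg U₀ hU₀ xb hxb y hy hactive u hstat
end

section
/- Let f : ℝⁿ × ℝᵐ → ℝ and g_i : ℝⁿ × ℝᵐ → ℝ (i = 1,…,q) be convex in the joint variable (x,y) and differentiable. Let x̄ ∈ ℝⁿ, ȳ ∈ ℝᵐ and u ∈ ℝ^q satisfy: g_i(x̄,ȳ) ≤ 0 and u_i ≥ 0 for all i, Σ_i u_i g_i(x̄,ȳ) = 0, and ∇_y f(x̄,ȳ) + Σ_i u_i ∇_y g_i(x̄,ȳ) = 0. Then for every x ∈ ℝⁿ and every y ∈ ℝᵐ with g_i(x,y) ≤ 0 for all i, f(x,y) ≥ f(x̄,ȳ) + ⟨∇_x f(x̄,ȳ) + Σ_i u_i ∇_x g_i(x̄,ȳ), x − x̄⟩. In particular, ∇_x ℓ(x̄,ȳ,u), with ℓ(x,y,u) := f(x,y) + uᵀg(x,y), is a subgradient (in the sense of convex analysis) of the lower-level optimal value function φ(x) := inf{f(x,y) : g(x,y) ≤ 0} at x̄. -/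
/-!
The Lagrangian `ℓ(x, y) = f(x, y) + ∑ᵢ uᵢ gᵢ(x, y)` is jointly convex, and by stationarity its
partial gradient in `y` vanishes at `(x̄, ȳ)`. Its gradient inequality at `(x̄, ȳ)` therefore
reads `ℓ(x, y) ≥ ℓ(x̄, ȳ) + ⟪∇ₓℓ(x̄, ȳ), x - x̄⟫`. Complementary slackness gives
`ℓ(x̄, ȳ) = f(x̄, ȳ)`, and on the feasible set `u ≥ 0` gives `ℓ ≤ f`. Taking the infimum over
feasible `y` turns this into the subgradient inequality for `φ`, and `x = x̄` shows that `ȳ`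
attains `φ(x̄)`.
-/

open Set
open scoped RealInnerProductSpace

section Convex

variable {E : Type*} [NormedAddCommGroup E] [NormedSpace ℝ E]

theorem ConvexOn.add_fderiv_sub_le {s : Set E} {F : E → ℝ} {F' : E →L[ℝ] ℝ} {a b : E}
    (hF : ConvexOn ℝ s F) (ha : a ∈ s) (hb : b ∈ s) (hd : HasFDerivAt F F' a) :
    F a + F' (b - a) ≤ F b := by
  set ℓ : ℝ →ᵃ[ℝ] E := AffineMap.lineMap a b
  have hline : ConvexOn ℝ (ℓ ⁻¹' s) (F ∘ ℓ) := hF.comp_affineMap ℓ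
  have hderiv : HasDerivAt (F ∘ ℓ) (F' (b - a)) 0 :=
    hd.comp_hasDerivAt_of_eq 0 AffineMap.hasDerivAt_lineMap (by simp [ℓ])
  have := hline.le_slope_of_hasDerivAt (x := 0) (y := 1) (by simpa [ℓ] using ha)
    (by simpa [ℓ] using hb) one_pos hderiv
  simp only [ℓ, slope_def_field, Function.comp_apply, AffineMap.lineMap_apply_zero,
    AffineMap.lineMap_apply_one, sub_zero, div_one] at this
  linarith

theorem convexOn_sum_mul {ι : Type*} {s : Set E} {t : Finset ι} {u : ι → ℝ} {g : ι → E → ℝ}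
    (hs : Convex ℝ s) (hu : ∀ i ∈ t, 0 ≤ u i) (hg : ∀ i ∈ t, ConvexOn ℝ s (g i)) :
    ConvexOn ℝ s (fun x => ∑ i ∈ t, u i * g i x) := by
  classical
  induction t using Finset.induction_on with
  | empty => simpa using convexOn_const (0 : ℝ) hs
  | insert i t hi ih =>
    simp only [Finset.sum_insert hi]
    exact ((hg i (by simp)).smul (hu i (by simp))).add
      (ih (fun j hj => hu j (by simp [hj])) (fun j hj => hg j (by simp [hj])))

variable {F : Type*} [NormedAddCommGroup F] [NormedSpace ℝ F]

theorem DifferentiableAt.differentiableAt_prodMk_left {Φ : E × F → ℝ} {a : E} {b : F}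
    (h : DifferentiableAt ℝ Φ (a, b)) : DifferentiableAt ℝ (fun x => Φ (x, b)) a :=
  h.comp a (hasFDerivAt_prodMk_left a b).differentiableAt

theorem DifferentiableAt.differentiableAt_prodMk_right {Φ : E × F → ℝ} {a : E} {b : F}
    (h : DifferentiableAt ℝ Φ (a, b)) : DifferentiableAt ℝ (fun y => Φ (a, y)) b :=
  h.comp b (hasFDerivAt_prodMk_right a b).differentiableAt

theorem ConvexOn.add_partial_fderiv_le {s : Set (E × F)} {Φ : E × F → ℝ}
    {Dx : E →L[ℝ] ℝ} {Dy : F →L[ℝ] ℝ} {a x : E} {b y : F}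
    (hΦ : ConvexOn ℝ s Φ) (hab : (a, b) ∈ s) (hxy : (x, y) ∈ s) (hd : DifferentiableAt ℝ Φ (a, b))
    (hx : HasFDerivAt (fun x => Φ (x, b)) Dx a) (hy : HasFDerivAt (fun y => Φ (a, y)) Dy b) :
    Φ (a, b) + Dx (x - a) + Dy (y - b) ≤ Φ (x, y) := by
  set D := fderiv ℝ Φ (a, b)
  have hDx : D.comp (.inl ℝ E F) = Dx :=
    (hd.hasFDerivAt.comp a (hasFDerivAt_prodMk_left a b)).unique hx
  have hDy : D.comp (.inr ℝ E F) = Dy :=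
    (hd.hasFDerivAt.comp b (hasFDerivAt_prodMk_right a b)).unique hy
  have := hΦ.add_fderiv_sub_le hab hxy hd.hasFDerivAt
  rw [← D.comp_inl_add_comp_inr, hDx, hDy] at this
  simpa [add_assoc] using this

end Convex

theorem HasGradientAt.add_sum_mul {E ι : Type*} [NormedAddCommGroup E] [InnerProductSpace ℝ E]
    [CompleteSpace E] [Fintype ι] {f : E → ℝ} {g : ι → E → ℝ} {f' : E} {g' : ι → E} {x : E}
    (u : ι → ℝ) (hf : HasGradientAt f f' x) (hg : ∀ i, HasGradientAt (g i) (g' i) x) :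
    HasGradientAt (fun x => f x + ∑ i, u i * g i x) (f' + ∑ i, u i • g' i) x := by
  rw [hasGradientAt_iff_hasFDerivAt, map_add, map_sum]
  simp only [map_smul]
  exact hf.hasFDerivAt.add (HasFDerivAt.fun_sum fun i _ => (hg i).hasFDerivAt.const_mul (u i))

section KKT

variable {E F ι : Type*} [NormedAddCommGroup E] [InnerProductSpace ℝ E] [CompleteSpace E]
  [NormedAddCommGroup F] [InnerProductSpace ℝ F] [CompleteSpace F] [Fintype ι]

theorem add_inner_gradient_le_of_kkt (f : E → F → ℝ) (g : ι → E → F → ℝ)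
    (hfconv : ConvexOn ℝ univ (fun p : E × F => f p.1 p.2))
    (hgconv : ∀ i, ConvexOn ℝ univ (fun p : E × F => g i p.1 p.2))
    {xb : E} {yb : F} {u : ι → ℝ}
    (hfdiff : DifferentiableAt ℝ (fun p : E × F => f p.1 p.2) (xb, yb))
    (hgdiff : ∀ i, DifferentiableAt ℝ (fun p : E × F => g i p.1 p.2) (xb, yb))
    (hu : ∀ i, 0 ≤ u i) (hcomp : ∑ i, u i * g i xb yb = 0)
    (hstat : gradient (fun y => f xb y) yb + ∑ i, u i • gradient (fun y => g i xb y) yb = 0)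
    {x : E} {y : F} (hxy : ∀ i, g i x y ≤ 0) :
    f xb yb + ⟪gradient (fun x' => f x' yb) xb +
      ∑ i, u i • gradient (fun x' => g i x' yb) xb, x - xb⟫ ≤ f x y := by
  set ℓ : E × F → ℝ := fun p => f p.1 p.2 + ∑ i, u i * g i p.1 p.2
  have hconv : ConvexOn ℝ univ ℓ :=
    hfconv.add (convexOn_sum_mul convex_univ (fun i _ => hu i) (fun i _ => hgconv i))
  have hdiff : DifferentiableAt ℝ ℓ (xb, yb) :=
    hfdiff.add (DifferentiableAt.fun_sum fun i _ => (hgdiff i).const_mul (u i))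
  have hx := HasGradientAt.add_sum_mul u hfdiff.differentiableAt_prodMk_left.hasGradientAt
    fun i => (hgdiff i).differentiableAt_prodMk_left.hasGradientAt
  have hy := HasGradientAt.add_sum_mul u hfdiff.differentiableAt_prodMk_right.hasGradientAt
    fun i => (hgdiff i).differentiableAt_prodMk_right.hasGradientAt
  rw [hstat] at hy
  have key := hconv.add_partial_fderiv_le (x := x) (y := y) trivial trivial hdiff
    hx.hasFDerivAt hy.hasFDerivAt
  have hpen : ∑ i, u i * g i x y ≤ 0 :=
    Finset.sum_nonpos fun i _ => mul_nonpos_of_nonneg_of_nonpos (hu i) (hxy i)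
  simp only [ℓ, hcomp, InnerProductSpace.toDual_apply_apply, inner_zero_left] at key
  linarith

end KKT

section ValueFunction

variable {E F : Type*}

noncomputable def valueFunction (f : E → F → ℝ) (C : E → F → Prop) (x : E) : EReal :=
  sInf {e : EReal | ∃ y, C x y ∧ e = (f x y : EReal)}

theorem valueFunction_le {f : E → F → ℝ} {C : E → F → Prop} {x : E} {y : F} (hy : C x y) :
    valueFunction f C x ≤ f x y :=
  sInf_le ⟨y, hy, rfl⟩

theorem coe_le_valueFunction {f : E → F → ℝ} {C : E → F → Prop} {x : E} {c : ℝ}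
    (h : ∀ y, C x y → c ≤ f x y) : (c : EReal) ≤ valueFunction f C x :=
  le_sInf fun _ ⟨y, hy, he⟩ => he ▸ EReal.coe_le_coe_iff.2 (h y hy)

variable [NormedAddCommGroup E] [InnerProductSpace ℝ E]
  {f : E → F → ℝ} {C : E → F → Prop} {xb : E} {yb : F} {v : E}

theorem valueFunction_eq_of_add_inner_le (hmin : ∀ x y, C x y → f xb yb + ⟪v, x - xb⟫ ≤ f x y)
    (hyb : C xb yb) : valueFunction f C xb = f xb yb :=
  le_antisymm (valueFunction_le hyb)
    (coe_le_valueFunction fun y hy => by simpa using hmin xb y hy)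

theorem valueFunction_add_inner_le (hmin : ∀ x y, C x y → f xb yb + ⟪v, x - xb⟫ ≤ f x y)
    (hyb : C xb yb) (x : E) :
    valueFunction f C xb + (⟪v, x - xb⟫ : EReal) ≤ valueFunction f C x := by
  rw [valueFunction_eq_of_add_inner_le hmin hyb, ← EReal.coe_add]
  exact coe_le_valueFunction (hmin x)

end ValueFunction

/-- For the fully convex lower-level problem min_y {f(x,y) : g(x,y) ≤ 0} with
KKT point (x̄,ȳ,u): every feasible (x,y) satisfies
f(x,y) ≥ f(x̄,ȳ) + ⟨∇_x f(x̄,ȳ) + Σᵢ uᵢ ∇_x gᵢ(x̄,ȳ), x − x̄⟩; in particular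
∇_x ℓ(x̄,ȳ,u) is a subgradient of the optimal value function
φ(x) := inf{f(x,y) : g(x,y) ≤ 0} at x̄. -/
theorem stmt_11 {n m q : ℕ}
    (f : EuclideanSpace ℝ (Fin n) → EuclideanSpace ℝ (Fin m) → ℝ)
    (g : Fin q → EuclideanSpace ℝ (Fin n) → EuclideanSpace ℝ (Fin m) → ℝ)
    (hfconv : ConvexOn ℝ Set.univ
      (fun p : EuclideanSpace ℝ (Fin n) × EuclideanSpace ℝ (Fin m) => f p.1 p.2))
    (hgconv : ∀ i, ConvexOn ℝ Set.univ
      (fun p : EuclideanSpace ℝ (Fin n) × EuclideanSpace ℝ (Fin m) => g i p.1 p.2))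
    (hfdiff : Differentiable ℝ
      (fun p : EuclideanSpace ℝ (Fin n) × EuclideanSpace ℝ (Fin m) => f p.1 p.2))
    (hgdiff : ∀ i, Differentiable ℝ
      (fun p : EuclideanSpace ℝ (Fin n) × EuclideanSpace ℝ (Fin m) => g i p.1 p.2))
    (xb : EuclideanSpace ℝ (Fin n)) (yb : EuclideanSpace ℝ (Fin m)) (u : Fin q → ℝ)
    (hfeas : ∀ i, g i xb yb ≤ 0) (hu : ∀ i, 0 ≤ u i)
    (hcomp : ∑ i, u i * g i xb yb = 0)
    (hstat : gradient (fun y => f xb y) yb +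
      ∑ i, u i • gradient (fun y => g i xb y) yb = 0)
    (φ : EuclideanSpace ℝ (Fin n) → EReal)
    (hφ : ∀ x, φ x = sInf {e : EReal |
      ∃ y : EuclideanSpace ℝ (Fin m), (∀ i, g i x y ≤ 0) ∧ e = ((f x y : ℝ) : EReal)}) :
    (∀ (x : EuclideanSpace ℝ (Fin n)) (y : EuclideanSpace ℝ (Fin m)),
      (∀ i, g i x y ≤ 0) →
        f xb yb + ⟪gradient (fun x' => f x' yb) xb +
            ∑ i, u i • gradient (fun x' => g i x' yb) xb, x - xb⟫ ≤ f x y) ∧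
    φ xb = ((f xb yb : ℝ) : EReal) ∧
    (∀ x : EuclideanSpace ℝ (Fin n),
      φ xb + ((⟪gradient (fun x' => f x' yb) xb +
          ∑ i, u i • gradient (fun x' => g i x' yb) xb, x - xb⟫ : ℝ) : EReal) ≤ φ x) := by
  have hmin := fun x y (hxy : ∀ i, g i x y ≤ 0) =>
    add_inner_gradient_le_of_kkt f g hfconv hgconv (hfdiff _) (fun i => hgdiff i _) hu hcomp hstat
      hxy
  have hval : φ = valueFunction f (fun x y => ∀ i, g i x y ≤ 0) := funext hφ
  subst hval
  exact ⟨hmin, valueFunction_eq_of_add_inner_le hmin hfeas, valueFunction_add_inner_le hmin hfeas⟩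
end

section
/- Let g : ℝᴺ → ℝ^q be differentiable and consider the constraint system in the variables (z,u) ∈ ℝᴺ × ℝ^q given by the inequality constraints −u_i ≤ 0 and g_i(z) ≤ 0 (i = 1,…,q) and the single equality constraint h(z,u) := Σ_i u_i g_i(z) = 0. Then at every feasible point (z̄,ū) (i.e., ū ≥ 0, g(z̄) ≤ 0, ūᵀg(z̄) = 0) the Mangasarian–Fromovitz constraint qualification fails: there exist multipliers α¹, α² ∈ ℝ^q with α¹ ≥ 0, α² ≥ 0, α¹_i ū_i = 0 and α²_i g_i(z̄) = 0 for all i, and β ∈ ℝ with (α¹, α², β) ≠ 0, such that the gradient combination vanishes: Σ_i α¹_i ∇(−u_i)(z̄,ū) + Σ_i α²_i ∇(g_i∘π_z)(z̄,ū) + β ∇h(z̄,ū) = 0, where all gradients are taken with respect to (z,u). (One may take α¹ = −g(z̄), α² = ū, β = −1.) -/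
/-!
With `α¹ = -g(z̄)`, `α² = ū`, `β = -1` the combination is
`Σᵢ (gᵢ(z̄) ∇uᵢ + ūᵢ ∇gᵢ) - ∇(Σᵢ uᵢ gᵢ)`, which vanishes by the product rule, and `β ≠ 0`
makes the multipliers nontrivial. The sign and complementarity conditions hold because
`Σᵢ ūᵢ gᵢ(z̄) = 0` is a sum of nonpositive terms, so each `ūᵢ gᵢ(z̄)` vanishes.
-/

theorem Finset.mul_eq_zero_of_sum_mul_eq_zero {ι R : Type*} [Semiring R] [PartialOrder R]
    [IsOrderedRing R] {s : Finset ι} {a b : ι → R} (ha : ∀ i ∈ s, 0 ≤ a i)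
    (hb : ∀ i ∈ s, b i ≤ 0) (hsum : ∑ i ∈ s, a i * b i = 0) :
    ∀ i ∈ s, a i * b i = 0 :=
  (Finset.sum_eq_zero_iff_of_nonpos fun i hi =>
    mul_nonpos_of_nonneg_of_nonpos (ha i hi) (hb i hi)).mp hsum

section ProductRule

variable {ι E : Type*} [NormedAddCommGroup E] [NormedSpace ℝ E] {s : Finset ι}
  {u v : ι → E → ℝ} {x : E}

theorem fderiv_finset_sum_mul (hu : ∀ i ∈ s, DifferentiableAt ℝ (u i) x)
    (hv : ∀ i ∈ s, DifferentiableAt ℝ (v i) x) :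
    fderiv ℝ (fun w => ∑ i ∈ s, u i w * v i w) x
      = ∑ i ∈ s, (u i x • fderiv ℝ (v i) x + v i x • fderiv ℝ (u i) x) := by
  rw [fderiv_fun_sum (A := fun i w => u i w * v i w) fun i hi => (hu i hi).fun_mul (hv i hi)]
  exact Finset.sum_congr rfl fun i hi => fderiv_mul (hu i hi) (hv i hi)

theorem sum_neg_smul_fderiv_neg_add_sum_smul_fderiv
    (hu : ∀ i ∈ s, DifferentiableAt ℝ (u i) x) (hv : ∀ i ∈ s, DifferentiableAt ℝ (v i) x) :
    ∑ i ∈ s, (-v i x) • fderiv ℝ (fun w => -u i w) x + ∑ i ∈ s, u i x • fderiv ℝ (v i) x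
      = fderiv ℝ (fun w => ∑ i ∈ s, u i w * v i w) x := by
  simp only [fderiv_finset_sum_mul hu hv, fderiv_fun_neg, neg_smul_neg, ← Finset.sum_add_distrib,
    add_comm]

end ProductRule

/-- The Mangasarian–Fromovitz constraint qualification fails at every feasible
point of the complementarity system −u ≤ 0, g(z) ≤ 0, Σᵢ uᵢ gᵢ(z) = 0 (in the
variables (z,u)): there are multipliers (α¹,α²,β) ≠ 0 with α¹,α² ≥ 0,
α¹ᵢ ūᵢ = 0, α²ᵢ gᵢ(z̄) = 0, whose derivative combination vanishes. -/
theorem stmt_14 {N q : ℕ} (g : Fin q → (Fin N → ℝ) → ℝ)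
    (hg : ∀ i, Differentiable ℝ (g i))
    (zb : Fin N → ℝ) (ub : Fin q → ℝ)
    (hub : ∀ i, 0 ≤ ub i) (hgzb : ∀ i, g i zb ≤ 0)
    (hcomp : ∑ i, ub i * g i zb = 0) :
    ∃ (α₁ α₂ : Fin q → ℝ) (β : ℝ),
      (∀ i, 0 ≤ α₁ i) ∧ (∀ i, 0 ≤ α₂ i) ∧
      (∀ i, α₁ i * ub i = 0) ∧ (∀ i, α₂ i * g i zb = 0) ∧
      ¬(α₁ = 0 ∧ α₂ = 0 ∧ β = 0) ∧
      (∑ i, α₁ i • fderiv ℝ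
          (fun w : (Fin N → ℝ) × (Fin q → ℝ) => -(w.2 i)) (zb, ub)) +
        (∑ i, α₂ i • fderiv ℝ
          (fun w : (Fin N → ℝ) × (Fin q → ℝ) => g i w.1) (zb, ub)) +
        β • fderiv ℝ
          (fun w : (Fin N → ℝ) × (Fin q → ℝ) => ∑ j, w.2 j * g j w.1) (zb, ub) = 0 := by
  have hterm : ∀ i, ub i * g i zb = 0 := fun i =>
    Finset.mul_eq_zero_of_sum_mul_eq_zero (fun i _ => hub i) (fun i _ => hgzb i) hcomp i
      (Finset.mem_univ i)
  refine ⟨fun i => -g i zb, ub, -1, fun i => neg_nonneg.mpr (hgzb i), hub,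
    fun i => by linear_combination -hterm i, hterm, fun h => by norm_num at h, ?_⟩
  beta_reduce
  rw [sum_neg_smul_fderiv_neg_add_sum_smul_fderiv (x := (zb, ub))
    (u := fun i (w : (Fin N → ℝ) × (Fin q → ℝ)) => w.2 i) (v := fun i w => g i w.1)
    (fun i _ => by fun_prop) (fun i _ => ((hg i).comp differentiable_fst).differentiableAt)]
  module
end

section
/- The merit function ψ : ℝ² → ℝ defined by ψ(a,b) := (1/2)(√(a² + b²) − (a + b))² is continuously differentiable on all of ℝ² (even though the Fischer–Burmeister function φ_FB(a,b) := √(a² + b²) − (a + b) itself is not differentiable at the origin). -/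
/-!
Write `ψ = ½ (‖x‖ - ℓ x)²`, where `‖·‖` is the Euclidean norm on `ℝ²` and `ℓ (a, b) = a + b`.
Expanding the square leaves the smooth terms `‖x‖²` and `(ℓ x)²` and the product `‖x‖ * ℓ x`.
That product is `C¹`: away from `0` the norm is smooth, and near `0` its derivative
`‖x‖ • ℓ + ℓ x • D‖·‖(x)` is `O(‖x‖)` because the norm is `1`-Lipschitz, so the derivative
extends continuously by `0`. The Fischer–Burmeister function itself is `‖x‖ - ℓ x`, which is
differentiable at `0` only if the norm is.
-/

open Asymptotics Filter Topology

theorem hasFDerivAt_norm_mul_zero {E : Type*} [NormedAddCommGroup E] [NormedSpace ℝ E]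
    {f : E → ℝ} (hf : ContinuousAt f 0) (h0 : f 0 = 0) :
    HasFDerivAt (fun x => ‖x‖ * f x) (0 : E →L[ℝ] ℝ) 0 := by
  have hf0 : f =o[𝓝 0] (fun _ => (1 : ℝ)) := (isLittleO_one_iff ℝ).2 (h0 ▸ hf.tendsto)
  have := (isBigO_refl (fun x : E => ‖x‖) _).mul_isLittleO hf0
  rw [hasFDerivAt_iff_isLittleO_nhds_zero]
  simpa [h0] using isLittleO_norm_right.1 (by simpa using this)

section InnerProductSpace

variable {E : Type*} [NormedAddCommGroup E] [InnerProductSpace ℝ E] {f : E → ℝ}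

/-- At `x = 0` the right-hand side vanishes even though `fderiv ℝ (‖·‖) 0` is a junk value. -/
theorem fderiv_norm_mul (hf : Differentiable ℝ f) (h0 : f 0 = 0) (x : E) :
    fderiv ℝ (fun y => ‖y‖ * f y) x = ‖x‖ • fderiv ℝ f x + f x • fderiv ℝ (‖·‖) x := by
  rcases eq_or_ne x 0 with rfl | hx
  · simp [(hasFDerivAt_norm_mul_zero hf.continuous.continuousAt h0).fderiv, h0]
  · exact fderiv_fun_mul ((contDiffAt_norm (n := 1) ℝ hx).differentiableAt one_ne_zero) (hf x)

theorem ContDiff.norm_mul_of_map_zero (hf : ContDiff ℝ 1 f) (h0 : f 0 = 0) :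
    ContDiff ℝ 1 (fun x => ‖x‖ * f x) := by
  have hdiff := hf.differentiable one_ne_zero
  refine contDiff_one_iff_fderiv.2 ⟨fun x => ?_, continuous_iff_continuousAt.2 fun x => ?_⟩
  · rcases eq_or_ne x 0 with rfl | hx
    · exact (hasFDerivAt_norm_mul_zero hf.continuous.continuousAt h0).differentiableAt
    · exact ((contDiffAt_norm (n := 1) ℝ hx).differentiableAt one_ne_zero).mul (hdiff x)
  rcases eq_or_ne x 0 with rfl | hx
  · have hnorm (y : E) : ‖fderiv ℝ (‖·‖) y‖ ≤ 1 := by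
      simpa using norm_fderiv_le_of_lipschitz ℝ lipschitzWith_one_norm (x₀ := y)
    have hfirst : Tendsto (fun y : E => ‖y‖ • fderiv ℝ f y) (𝓝 0) (𝓝 0) := by
      simpa using (continuous_norm.fun_smul (hf.continuous_fderiv one_ne_zero)).tendsto 0
    have hsecond : Tendsto (fun y : E => f y • fderiv ℝ (‖·‖) y) (𝓝 0) (𝓝 0) := by
      refine squeeze_zero_norm (fun y => ?_) (by simpa [h0] using (hf.continuous.tendsto 0).norm)
      simpa [norm_smul] using mul_le_of_le_one_right (norm_nonneg (f y)) (hnorm y)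
    rw [ContinuousAt, funext (fderiv_norm_mul hdiff h0)]
    simpa [h0] using hfirst.add hsecond
  · exact ((contDiffAt_norm ℝ hx).mul hf.contDiffAt).continuousAt_fderiv one_ne_zero

theorem ContDiff.sq_norm_sub_of_map_zero (hf : ContDiff ℝ 1 f) (h0 : f 0 = 0) :
    ContDiff ℝ 1 (fun x => (‖x‖ - f x) ^ 2) := by
  have hexpand : (fun x => (‖x‖ - f x) ^ 2) = fun x => ‖x‖ ^ 2 - 2 * (‖x‖ * f x) + f x ^ 2 :=
    funext fun x => by ring
  rw [hexpand]
  exact ((contDiff_norm_sq ℝ).sub (contDiff_const.mul (hf.norm_mul_of_map_zero h0))).add (hf.pow 2)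

end InnerProductSpace

theorem WithLp.norm_toLp_two_prod (p : ℝ × ℝ) : ‖WithLp.toLp 2 p‖ = √(p.1 ^ 2 + p.2 ^ 2) := by
  simp [WithLp.prod_norm_eq_of_L2]

/-- The Fischer–Burmeister merit function ψ(a,b) = (1/2)(√(a²+b²) − (a+b))² is
continuously differentiable on ℝ², even though the Fischer–Burmeister function
itself is not differentiable at the origin. -/
theorem stmt_16 :
    ContDiff ℝ 1 (fun p : ℝ × ℝ =>
      (1 / 2) * (Real.sqrt (p.1 ^ 2 + p.2 ^ 2) - (p.1 + p.2)) ^ 2) ∧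
    ¬ DifferentiableAt ℝ (fun p : ℝ × ℝ =>
      Real.sqrt (p.1 ^ 2 + p.2 ^ 2) - (p.1 + p.2)) (0, 0) := by
  let e := (WithLp.prodContinuousLinearEquiv 2 ℝ ℝ ℝ).symm
  let ℓ := WithLp.fstL 2 ℝ ℝ ℝ + WithLp.sndL 2 ℝ ℝ ℝ
  have hφ (p : ℝ × ℝ) : √(p.1 ^ 2 + p.2 ^ 2) - (p.1 + p.2) = ‖e p‖ - ℓ (e p) := by
    simp [e, ℓ, WithLp.norm_toLp_two_prod]
  simp only [hφ]
  constructor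
  · exact contDiff_const.mul ((ℓ.contDiff.sq_norm_sub_of_map_zero ℓ.map_zero).comp e.contDiff)
  · intro h
    apply not_differentiableAt_norm_zero (WithLp 2 (ℝ × ℝ))
    have hnorm : (‖·‖ : WithLp 2 (ℝ × ℝ) → ℝ) = (fun p => ‖e p‖ - ℓ (e p)) ∘ e.symm + ℓ := by
      funext y
      simp
    rw [hnorm]
    exact (h.comp (0 : WithLp 2 (ℝ × ℝ)) e.symm.differentiableAt).add ℓ.differentiableAt
end

section
/- Define φ_M : ℝ⁴ → ℝ by φ_M(a,b,c,d) := min{ max{−a, |b|, |c|}, max{−b, |a|, |d|}, max{|a|, |b|, c, d} }. Then φ_M ≥ 0 everywhere, and φ_M(a,b,c,d) = 0 if and only if (a ≥ 0 ∧ b = 0 ∧ c = 0) ∨ (b ≥ 0 ∧ a = 0 ∧ d = 0) ∨ (a = 0 ∧ b = 0 ∧ c ≤ 0 ∧ d ≤ 0). -/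
/-- The M-stationarity function. -/
noncomputable def phiM (a b c d : ℝ) : ℝ :=
  min (min (max (max (-a) |b|) |c|) (max (max (-b) |a|) |d|))
    (max (max (max |a| |b|) c) d)

/-- The M-stationarity function φ_M is nonnegative and vanishes exactly on the
M-stationarity set. -/
theorem stmt_17 (a b c d : ℝ) :
    0 ≤ phiM a b c d ∧
    (phiM a b c d = 0 ↔
      (0 ≤ a ∧ b = 0 ∧ c = 0) ∨ (0 ≤ b ∧ a = 0 ∧ d = 0) ∨
      (a = 0 ∧ b = 0 ∧ c ≤ 0 ∧ d ≤ 0)) := by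
  have h : 0 ≤ phiM a b c d := by
    refine le_min (le_min ?_ ?_) ?_
    · exact (abs_nonneg b).trans ((le_max_right _ _).trans (le_max_left _ _))
    · exact (abs_nonneg a).trans ((le_max_right _ _).trans (le_max_left _ _))
    · exact (abs_nonneg a).trans
        (((le_max_left _ _).trans (le_max_left _ _)).trans (le_max_left _ _))
  refine ⟨h, ⟨fun e => ?_, fun e => le_antisymm ?_ h⟩⟩
  · have e' : phiM a b c d ≤ 0 := e.le
    unfold phiM at e'
    rcases min_le_iff.mp e' with h1 | h2
    · rcases min_le_iff.mp h1 with hA | hB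
      · obtain ⟨h', hc⟩ := max_le_iff.mp hA
        obtain ⟨ha, hb⟩ := max_le_iff.mp h'
        exact Or.inl ⟨by linarith, abs_nonpos_iff.mp hb, abs_nonpos_iff.mp hc⟩
      · obtain ⟨h', hd⟩ := max_le_iff.mp hB
        obtain ⟨hb, ha⟩ := max_le_iff.mp h'
        exact Or.inr (Or.inl ⟨by linarith, abs_nonpos_iff.mp ha, abs_nonpos_iff.mp hd⟩)
    · obtain ⟨h', hd⟩ := max_le_iff.mp h2
      obtain ⟨h'', hc⟩ := max_le_iff.mp h'
      obtain ⟨ha, hb⟩ := max_le_iff.mp h''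
      exact Or.inr (Or.inr ⟨abs_nonpos_iff.mp ha, abs_nonpos_iff.mp hb, hc, hd⟩)
  · unfold phiM
    rcases e with ⟨ha, hb, hc⟩ | ⟨hb, ha, hd⟩ | ⟨ha, hb, hc, hd⟩
    · exact ((min_le_left _ _).trans (min_le_left _ _)).trans
        (max_le (max_le (by linarith) (by simp [hb])) (by simp [hc]))
    · exact ((min_le_left _ _).trans (min_le_right _ _)).trans
        (max_le (max_le (by linarith) (by simp [ha])) (by simp [hd]))
    · exact (min_le_right _ _).trans
        (max_le (max_le (max_le (by simp [ha]) (by simp [hb])) hc) hd)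
end
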